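/- arXiv:1209.0573 — 7 statements merged into one kernel-verified Lean document; each statement's English description precedes it below -/
import Mathlib

section
/- For a, b ∈ F with a + b + h ≠ 0 and with the denominators in ε nonzero, ε(a) ⊙ ε(b) = ε((d + ab)/(h + a + b)), where ε(m) = ((m² + d)/(m² + hm − d), (2m + h)/(m² + hm − d)) and ⊙ is the conic group law (x,y) ⊙ (u,v) = (xu + yvd, yu + xv + yvh). -/
set_option maxHeartbeats 1000000 in
theorem epsilon_mul {F : Type*} [Field F] (h d a b : F)
    (ha : a ^ 2 + h * a - d ≠ 0) (hb : b ^ 2 + h * b - d ≠ 0)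
    (hab : a + b + h ≠ 0)
    (hc : ((d + a * b) / (h + a + b)) ^ 2 + h * ((d + a * b) / (h + a + b)) - d ≠ 0) :
    (let ea1 := (a ^ 2 + d) / (a ^ 2 + h * a - d)
     let ea2 := (2 * a + h) / (a ^ 2 + h * a - d)
     let eb1 := (b ^ 2 + d) / (b ^ 2 + h * b - d)
     let eb2 := (2 * b + h) / (b ^ 2 + h * b - d)
     let c := (d + a * b) / (h + a + b)
     (ea1 * eb1 + ea2 * eb2 * d, ea2 * eb1 + ea1 * eb2 + ea2 * eb2 * h)
       = ((c ^ 2 + d) / (c ^ 2 + h * c - d), (2 * c + h) / (c ^ 2 + h * c - d))) := by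
  have hhab : h + a + b ≠ 0 := by
    intro h0; apply hab; linear_combination h0
  have hc' : (d + a * b) ^ 2 + h * (d + a * b) * (h + a + b) - d * (h + a + b) ^ 2 ≠ 0 := by
    rw [show (d + a * b) ^ 2 + h * (d + a * b) * (h + a + b) - d * (h + a + b) ^ 2
        = (((d + a * b) / (h + a + b)) ^ 2 + h * ((d + a * b) / (h + a + b)) - d) * (h + a + b) ^ 2
        from by field_simp]
    exact mul_ne_zero hc (pow_ne_zero 2 hhab)
  have e1 : (((d + a * b) / (h + a + b)) ^ 2 + d) /
      (((d + a * b) / (h + a + b)) ^ 2 + h * ((d + a * b) / (h + a + b)) - d)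
      = ((d + a * b) ^ 2 + d * (h + a + b) ^ 2) /
        ((d + a * b) ^ 2 + h * (d + a * b) * (h + a + b) - d * (h + a + b) ^ 2) := by
    rw [div_eq_div_iff hc hc']
    field_simp
  have e2 : (2 * ((d + a * b) / (h + a + b)) + h) /
      (((d + a * b) / (h + a + b)) ^ 2 + h * ((d + a * b) / (h + a + b)) - d)
      = (2 * (d + a * b) + h * (h + a + b)) * (h + a + b) /
        ((d + a * b) ^ 2 + h * (d + a * b) * (h + a + b) - d * (h + a + b) ^ 2) := by
    rw [div_eq_div_iff hc hc']
    field_simp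
  simp only [Prod.mk.injEq]
  rw [e1, e2]
  constructor <;> · field_simp; ring
end

section
/- With N_n = W(1, z, 2z+h, z²+hz−d) and D_n = W(0, 1, 2z+h, z²+hz−d) (linear recurrences s_{n+2} = (2z+h)s_{n+1} − (z²+hz−d)s_n with the given initial terms), the addition formulas N_{n+m} = N_n·N_m + d·D_n·D_m and D_{n+m} = D_n·N_m + h·D_n·D_m + N_n·D_m hold for all n, m ≥ 0. -/
theorem redei_addition_formulas {F : Type*} [Field F] (h d z : F) (N D : ℕ → F)
    (hN0 : N 0 = 1) (hN1 : N 1 = z) (hD0 : D 0 = 0) (hD1 : D 1 = 1)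
    (hNrec : ∀ n, N (n + 2) = (2 * z + h) * N (n + 1) - (z ^ 2 + h * z - d) * N n)
    (hDrec : ∀ n, D (n + 2) = (2 * z + h) * D (n + 1) - (z ^ 2 + h * z - d) * D n) :
    ∀ n m : ℕ, N (n + m) = N n * N m + d * D n * D m ∧
      D (n + m) = D n * N m + h * D n * D m + N n * D m := by
  intro n
  induction n using Nat.twoStepInduction with
  | zero =>
    intro m
    simp [hN0, hD0]
  | one =>
    intro m
    induction m using Nat.twoStepInduction with
    | zero => simp [hN0, hD0, hN1, hD1]
    | one =>
      constructor
      · have := hNrec 0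
        simp [hN0, hN1, hD0, hD1] at this ⊢
        rw [this]; ring
      · have := hDrec 0
        simp [hN0, hN1, hD0, hD1] at this ⊢
        rw [this]; ring
    | more m ih1 ih2 =>
      have e : 1 + (m + 2) = (1 + m) + 2 := by omega
      have e1 : 1 + (m + 1) = (1 + m) + 1 := by omega
      constructor
      · rw [e, hNrec (1 + m), ih1.1, ← e1, ih2.1, hNrec m, hDrec m]
        ring
      · rw [e, hDrec (1 + m), ih1.2, ← e1, ih2.2, hNrec m, hDrec m]
        ring
  | more n ih1 ih2 =>
    intro m
    have e : n + 2 + m = (n + m) + 2 := by omega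
    have e1 : n + 1 + m = (n + m) + 1 := by omega
    constructor
    · rw [e, hNrec (n + m), ← e1, (ih2 m).1, (ih1 m).1, hNrec n, hDrec n]
      ring
    · rw [e, hDrec (n + m), ← e1, (ih2 m).2, (ih1 m).2, hNrec n, hDrec n]
      ring
end

section
/- With N_n and D_n defined by N_0 = 1, N_1 = z, D_0 = 0, D_1 = 1 and recurrence s_{n+2} = (2z+h)s_{n+1} − (z²+hz−d)s_n, the identity N_n² + h·N_n·D_n − d·D_n² = (z² + hz − d)ⁿ holds for all n ≥ 0. -/
theorem redei_norm_identity {F : Type*} [Field F] (h d z : F) (N D : ℕ → F)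
    (hN0 : N 0 = 1) (hN1 : N 1 = z) (hD0 : D 0 = 0) (hD1 : D 1 = 1)
    (hNrec : ∀ n, N (n + 2) = (2 * z + h) * N (n + 1) - (z ^ 2 + h * z - d) * N n)
    (hDrec : ∀ n, D (n + 2) = (2 * z + h) * D (n + 1) - (z ^ 2 + h * z - d) * D n) :
    ∀ n : ℕ, N n ^ 2 + h * N n * D n - d * D n ^ 2 = (z ^ 2 + h * z - d) ^ n := by
  set q := z ^ 2 + h * z - d with hq
  set a := 2 * z + h with ha
  have key : ∀ n : ℕ,
      (N n ^ 2 + h * N n * D n - d * D n ^ 2 = q ^ n) ∧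
      (N (n+1) ^ 2 + h * N (n+1) * D (n+1) - d * D (n+1) ^ 2 = q ^ (n+1)) ∧
      (2 * N (n+1) * N n + h * (N (n+1) * D n + N n * D (n+1))
        - 2 * d * D (n+1) * D n = a * q ^ n) := by
    intro n
    induction n with
    | zero =>
      refine ⟨?_, ?_, ?_⟩ <;> simp [hN0, hN1, hD0, hD1] <;> ring
    | succ m ih =>
      obtain ⟨h1, h2, h3⟩ := ih
      have rN := hNrec m
      have rD := hDrec m
      refine ⟨h2, ?_, ?_⟩
      · rw [rN, rD]
        have : (a * N (m+1) - q * N m) ^ 2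
            + h * (a * N (m+1) - q * N m) * (a * D (m+1) - q * D m)
            - d * (a * D (m+1) - q * D m) ^ 2
            = a ^ 2 * (N (m+1) ^ 2 + h * N (m+1) * D (m+1) - d * D (m+1) ^ 2)
              + q ^ 2 * (N m ^ 2 + h * N m * D m - d * D m ^ 2)
              - a * q * (2 * N (m+1) * N m + h * (N (m+1) * D m + N m * D (m+1))
                - 2 * d * D (m+1) * D m) := by ring
        rw [this, h1, h2, h3]
        ring
      · rw [rN, rD]
        have : 2 * (a * N (m+1) - q * N m) * N (m+1)
            + h * ((a * N (m+1) - q * N m) * D (m+1)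
              + N (m+1) * (a * D (m+1) - q * D m))
            - 2 * d * (a * D (m+1) - q * D m) * D (m+1)
            = 2 * a * (N (m+1) ^ 2 + h * N (m+1) * D (m+1) - d * D (m+1) ^ 2)
              - q * (2 * N (m+1) * N m + h * (N (m+1) * D m + N m * D (m+1))
                - 2 * d * D (m+1) * D m) := by ring
        rw [this, h2, h3]
        ring
  exact fun n => (key n).1
end

section
/- If z² + hz − d = 1, then for every n ≥ 0 the point (N_n, D_n) lies on the conic E = {(x,y) : x² + hxy − dy² = 1}, where N_n, D_n satisfy N_0 = 1, N_1 = z, D_0 = 0, D_1 = 1 and s_{n+2} = (2z+h)s_{n+1} − s_n. -/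
theorem redei_points_on_conic {F : Type*} [Field F] (h d z : F)
    (hz : z ^ 2 + h * z - d = 1) (N D : ℕ → F)
    (hN0 : N 0 = 1) (hN1 : N 1 = z) (hD0 : D 0 = 0) (hD1 : D 1 = 1)
    (hNrec : ∀ n, N (n + 2) = (2 * z + h) * N (n + 1) - N n)
    (hDrec : ∀ n, D (n + 2) = (2 * z + h) * D (n + 1) - D n) :
    ∀ n : ℕ, N n ^ 2 + h * N n * D n - d * D n ^ 2 = 1 := by
  have key : ∀ n : ℕ,
      (N n ^ 2 + h * N n * D n - d * D n ^ 2 = 1) ∧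
      (N (n+1) ^ 2 + h * N (n+1) * D (n+1) - d * D (n+1) ^ 2 = 1) ∧
      (2 * N n * N (n+1) + h * (N n * D (n+1) + N (n+1) * D n)
        - 2 * d * D n * D (n+1) = 2 * z + h) := by
    intro n
    induction n with
    | zero =>
      refine ⟨?_, ?_, ?_⟩
      · simp [hN0, hD0]
      · rw [hN1, hD1]; linear_combination hz
      · rw [hN0, hN1, hD0, hD1]; ring
    | succ n ih =>
      obtain ⟨h1, h2, h3⟩ := ih
      refine ⟨h2, ?_, ?_⟩
      · rw [hNrec n, hDrec n]
        linear_combination (2*z+h)^2 * h2 - (2*z+h) * h3 + h1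
      · rw [hNrec n, hDrec n]
        linear_combination 2*(2*z+h) * h2 - h3
  exact fun n => (key n).1
end

section
/- Define the generalized Rédei function Q_n(h,d,z) = N_n/D_n where N_n, D_n satisfy N_0=1, N_1=z, D_0=0, D_1=1 and s_{n+2} = (2z+h)s_{n+1} − (z²+hz−d)s_n. Then for all n, m ≥ 1 with D_n, D_m, D_{n+m} ≠ 0 and h + Q_n + Q_m ≠ 0, we have Q_{n+m} = (d + Q_n·Q_m)/(h + Q_n + Q_m). -/
theorem redei_function_mul {F : Type*} [Field F] (h d z : F) (N D : ℕ → F)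
    (hN0 : N 0 = 1) (hN1 : N 1 = z) (hD0 : D 0 = 0) (hD1 : D 1 = 1)
    (hNrec : ∀ n, N (n + 2) = (2 * z + h) * N (n + 1) - (z ^ 2 + h * z - d) * N n)
    (hDrec : ∀ n, D (n + 2) = (2 * z + h) * D (n + 1) - (z ^ 2 + h * z - d) * D n)
    (n m : ℕ) (hn : 1 ≤ n) (hm : 1 ≤ m)
    (hDn : D n ≠ 0) (hDm : D m ≠ 0) (hDnm : D (n + m) ≠ 0)
    (hden : h + N n / D n + N m / D m ≠ 0) :
    N (n + m) / D (n + m)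
      = (d + (N n / D n) * (N m / D m)) / (h + N n / D n + N m / D m) := by
  -- Step 1: one-step formulas
  have step1 : ∀ k, (N (k + 1) = z * N k + d * D k ∧ D (k + 1) = N k + (z + h) * D k) := by
    have H : ∀ k, (N (k + 1) = z * N k + d * D k ∧ D (k + 1) = N k + (z + h) * D k) ∧
        (N (k + 2) = z * N (k + 1) + d * D (k + 1) ∧
          D (k + 2) = N (k + 1) + (z + h) * D (k + 1)) := by
      intro k
      induction k with
      | zero =>
        refine ⟨⟨?_, ?_⟩, ?_, ?_⟩ <;>
          simp only [hNrec 0, hDrec 0, hN0, hN1, hD0, hD1] <;> ring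
      | succ k ih =>
        refine ⟨ih.2, ?_, ?_⟩
        · rw [hNrec (k + 1), show k + 1 + 1 = k + 2 from rfl, ih.2.1, ih.2.2]; ring
        · rw [hDrec (k + 1), show k + 1 + 1 = k + 2 from rfl, ih.2.1, ih.2.2]; ring
    exact fun k => (H k).1
  -- Step 2: addition formulas
  have key : ∀ k, (N (n + k) = N n * N k + d * (D n * D k) ∧
      D (n + k) = N n * D k + D n * N k + h * (D n * D k)) := by
    have H : ∀ k, (N (n + k) = N n * N k + d * (D n * D k) ∧
        D (n + k) = N n * D k + D n * N k + h * (D n * D k)) ∧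
        (N (n + (k + 1)) = N n * N (k + 1) + d * (D n * D (k + 1)) ∧
          D (n + (k + 1)) = N n * D (k + 1) + D n * N (k + 1) + h * (D n * D (k + 1))) := by
      intro k
      induction k with
      | zero =>
        constructor
        · simp [hN0, hD0]
        · rw [show n + (0 + 1) = n + 1 from rfl, (step1 n).1, (step1 n).2, hN1, hD1]
          constructor <;> ring
      | succ k ih =>
        refine ⟨ih.2, ?_, ?_⟩
        · rw [show n + (k + 1 + 1) = (n + k) + 2 by omega, hNrec (n + k),
            show k + 1 + 1 = k + 2 from rfl, hNrec k, hDrec k,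
            show n + k + 1 = n + (k + 1) from rfl, ih.2.1, ih.1.1]
          ring
        · rw [show n + (k + 1 + 1) = (n + k) + 2 by omega, hDrec (n + k),
            show k + 1 + 1 = k + 2 from rfl, hNrec k, hDrec k,
            show n + k + 1 = n + (k + 1) from rfl, ih.2.2, ih.1.2]
          ring
    exact fun k => (H k).1
  have h1 := (key m).1
  have h2 := (key m).2
  rw [h1, h2]
  have hden' : N n * D m + D n * N m + h * (D n * D m) ≠ 0 := by
    intro hc; apply hden; field_simp; linear_combination hc
  rw [div_eq_div_iff hden' hden]
  field_simp
  ring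
end

section
/- Let (a_n) and (b_n) be real sequences satisfying s_{n+2} = 2w·s_{n+1} − (w² − c)·s_n with initial values a_0, a_1 and b_0, b_1 respectively, where c > 0, w + √c > |w − √c|, and b_1 − b_0·w + b_0·√c ≠ 0. Then lim_{n→∞} a_n/b_n = (a_1 − a_0·w + a_0·√c)/(b_1 − b_0·w + b_0·√c). -/
lemma closed_form (w r : ℝ) (s : ℕ → ℝ)
    (hrec : ∀ n, s (n + 2) = 2 * w * s (n + 1) - (w ^ 2 - r ^ 2) * s n) :
    ∀ n, 2 * r * s n =
      (s 1 - s 0 * (w - r)) * (w + r) ^ n - (s 1 - s 0 * (w + r)) * (w - r) ^ n := by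
  have key : ∀ n, (2 * r * s n =
      (s 1 - s 0 * (w - r)) * (w + r) ^ n - (s 1 - s 0 * (w + r)) * (w - r) ^ n) ∧
      (2 * r * s (n + 1) =
      (s 1 - s 0 * (w - r)) * (w + r) ^ (n + 1) - (s 1 - s 0 * (w + r)) * (w - r) ^ (n + 1)) := by
    intro n
    induction n with
    | zero => constructor <;> ring
    | succ k ih =>
      refine ⟨ih.2, ?_⟩
      rw [hrec k]
      linear_combination 2 * w * ih.2 - (w ^ 2 - r ^ 2) * ih.1
  exact fun n => (key n).1

theorem recurrence_ratio_limit (w c : ℝ) (a b : ℕ → ℝ)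
    (hc : 0 < c) (hdom : |w - Real.sqrt c| < w + Real.sqrt c)
    (hb : b 1 - b 0 * w + b 0 * Real.sqrt c ≠ 0)
    (ha_rec : ∀ n, a (n + 2) = 2 * w * a (n + 1) - (w ^ 2 - c) * a n)
    (hb_rec : ∀ n, b (n + 2) = 2 * w * b (n + 1) - (w ^ 2 - c) * b n) :
    Filter.Tendsto (fun n => a n / b n) Filter.atTop
      (nhds ((a 1 - a 0 * w + a 0 * Real.sqrt c) /
             (b 1 - b 0 * w + b 0 * Real.sqrt c))) := by
  set r := Real.sqrt c with hrdef
  have hr : 0 < r := Real.sqrt_pos.mpr hc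
  have hr2 : r ^ 2 = c := Real.sq_sqrt hc.le
  rw [← hr2] at ha_rec hb_rec
  have hca := closed_form w r a ha_rec
  have hcb := closed_form w r b hb_rec
  set p := w + r with hpdef
  set q := w - r with hqdef
  have hp : 0 < p := lt_of_le_of_lt (abs_nonneg q) hdom
  set Aa := a 1 - a 0 * q with hAa
  set Ba := a 1 - a 0 * p with hBa
  set Ab := b 1 - b 0 * q with hAb
  set Bb := b 1 - b 0 * p with hBb
  have hAb0 : Ab ≠ 0 := by rw [hAb, hqdef]; intro h; apply hb; linarith [h]
  have hx : |q / p| < 1 := by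
    rw [abs_div, abs_of_pos hp, div_lt_one hp]; exact hdom
  have hx0 : Filter.Tendsto (fun n : ℕ => (q / p) ^ n) Filter.atTop (nhds 0) :=
    tendsto_pow_atTop_nhds_zero_of_abs_lt_one hx
  have heq : ∀ n, a n / b n = (Aa - Ba * (q / p) ^ n) / (Ab - Bb * (q / p) ^ n) := by
    intro n
    have h1 : a n / b n = (2 * r * a n) / (2 * r * b n) := by
      rw [mul_div_mul_left _ _ (by positivity)]
    rw [h1, hca n, hcb n]
    have hpn : (p : ℝ) ^ n ≠ 0 := pow_ne_zero n hp.ne'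
    have hq : q ^ n = (q / p) ^ n * p ^ n := by
      rw [div_pow, div_mul_cancel₀ _ hpn]
    rw [hq]
    rw [show Aa * p ^ n - Ba * ((q/p)^n * p^n) = (Aa - Ba * (q/p)^n) * p^n by ring,
        show Ab * p ^ n - Bb * ((q/p)^n * p^n) = (Ab - Bb * (q/p)^n) * p^n by ring,
        mul_div_mul_right _ _ hpn]
  have hlim : Filter.Tendsto (fun n => (Aa - Ba * (q / p) ^ n) / (Ab - Bb * (q / p) ^ n))
      Filter.atTop (nhds (Aa / Ab)) := by
    have h1 : Filter.Tendsto (fun n : ℕ => Aa - Ba * (q / p) ^ n) Filter.atTop (nhds Aa) := by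
      have := (tendsto_const_nhds (x := Aa)).sub ((tendsto_const_nhds (x := Ba)).mul hx0)
      simpa using this
    have h2 : Filter.Tendsto (fun n : ℕ => Ab - Bb * (q / p) ^ n) Filter.atTop (nhds Ab) := by
      have := (tendsto_const_nhds (x := Ab)).sub ((tendsto_const_nhds (x := Bb)).mul hx0)
      simpa using this
    exact h1.div h2 hAb0
  have hval : Aa / Ab = (a 1 - a 0 * w + a 0 * r) / (b 1 - b 0 * w + b 0 * r) := by
    rw [hAa, hAb, hqdef]; ring_nf
  rw [← hval]
  exact hlim.congr (fun n => (heq n).symm)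
end

section
/- Let (x,y) ∈ ℝ² satisfy x² + hxy − dy² = 1 with h² y² + 4hxy + 4x² − 4 > 0, 2x + hy > 0, and y > 0. Define (x_n, y_n) by x_0 = 1, x_1 = x, y_0 = 0, y_1 = y and s_{n+2} = (2x + hy)s_{n+1} − s_n (these are the coordinates of the n-th power of (x,y) under the conic group law). Then lim_{n→∞} y_n/x_n = 2y/(√(h²y² + 4hxy + 4x² − 4) − hy). -/
theorem conic_power_ratio_limit (h d x y : ℝ)
    (hxy : x ^ 2 + h * x * y - d * y ^ 2 = 1)
    (hdisc : 0 < h ^ 2 * y ^ 2 + 4 * h * x * y + 4 * x ^ 2 - 4)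
    (htrace : 2 < 2 * x + h * y) (hy : 0 < y)
    (hden : Real.sqrt (h ^ 2 * y ^ 2 + 4 * h * x * y + 4 * x ^ 2 - 4) - h * y ≠ 0)
    (X Y : ℕ → ℝ)
    (hX0 : X 0 = 1) (hX1 : X 1 = x) (hY0 : Y 0 = 0) (hY1 : Y 1 = y)
    (hXrec : ∀ n, X (n + 2) = (2 * x + h * y) * X (n + 1) - X n)
    (hYrec : ∀ n, Y (n + 2) = (2 * x + h * y) * Y (n + 1) - Y n) :
    Filter.Tendsto (fun n => Y n / X n) Filter.atTop
      (nhds (2 * y /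
        (Real.sqrt (h ^ 2 * y ^ 2 + 4 * h * x * y + 4 * x ^ 2 - 4) - h * y))) := by
  set t := 2 * x + h * y with ht
  set s := Real.sqrt (h ^ 2 * y ^ 2 + 4 * h * x * y + 4 * x ^ 2 - 4) with hs
  have hs2 : s ^ 2 = t ^ 2 - 4 := by
    rw [hs, Real.sq_sqrt hdisc.le, ht]; ring
  have hspos : 0 < s := Real.sqrt_pos.mpr hdisc
  set lam := (t + s) / 2 with hlamdef
  set mu := (t - s) / 2 with hmudef
  set A := (x - mu) / s with hA
  set B := (lam - x) / s with hB
  set C := y / s with hC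
  clear_value t s lam mu A B C
  have hsne : s ≠ 0 := hspos.ne'
  have hlm : lam * mu = 1 := by
    rw [hlamdef, hmudef]; linear_combination -hs2/4
  have hlam1 : 1 < lam := by rw [hlamdef]; linarith
  have hlampos : 0 < lam := by linarith
  have hmupos : 0 < mu := by nlinarith [hlm]
  have hmult : mu < lam := by rw [hlamdef, hmudef]; linarith
  have hsum : lam + mu = t := by rw [hlamdef, hmudef]; ring
  have hlamq : lam ^ 2 = t * lam - 1 := by linear_combination lam * hsum - hlm
  have hmuq : mu ^ 2 = t * mu - 1 := by linear_combination mu * hsum - hlm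
  have key : ∀ n, X n = A * lam ^ n + B * mu ^ n ∧ Y n = C * (lam ^ n - mu ^ n) := by
    intro n
    induction n using Nat.twoStepInduction with
    | zero =>
      constructor
      · rw [hX0, hA, hB, hlamdef, hmudef]; field_simp; try ring
      · rw [hY0]; simp
    | one =>
      constructor
      · rw [hX1, hA, hB, hlamdef, hmudef]; field_simp; try ring
      · rw [hY1, hC, hlamdef, hmudef]; field_simp; try ring
    | more n ih2 ih1 =>
      constructor
      · rw [hXrec n, ih1.1, ih2.1]
        linear_combination (-(A * lam ^ n)) * hlamq - (B * mu ^ n) * hmuq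
      · rw [hYrec n, ih1.2, ih2.2]
        linear_combination (-(C * lam ^ n)) * hlamq + (C * mu ^ n) * hmuq
  have hxmu : x - mu = (s - h * y) / 2 := by rw [hmudef, ht]; ring
  have hAne : A ≠ 0 := by
    rw [hA, hxmu]
    exact div_ne_zero (div_ne_zero hden two_ne_zero) hsne
  set r := mu / lam with hr
  clear_value r
  have hr0 : 0 ≤ r := by rw [hr]; exact le_of_lt (div_pos hmupos hlampos)
  have hr1 : r < 1 := by rw [hr]; exact (div_lt_one hlampos).mpr hmult
  have hval : C / A = 2 * y / (s - h * y) := by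
    rw [hC, hA, hxmu]
    field_simp
  have hrat : ∀ n, Y n / X n = (C - C * r ^ n) / (A + B * r ^ n) := by
    intro n
    have hlne : lam ^ n ≠ 0 := pow_ne_zero _ hlampos.ne'
    rw [(key n).1, (key n).2]
    rw [show C * (lam ^ n - mu ^ n) = lam ^ n * (C - C * r ^ n) by
          rw [hr, div_pow]; field_simp; try ring,
        show A * lam ^ n + B * mu ^ n = lam ^ n * (A + B * r ^ n) by
          rw [hr, div_pow]; field_simp; try ring,
        mul_div_mul_left _ _ hlne]
  have hrn : Filter.Tendsto (fun n => r ^ n) Filter.atTop (nhds 0) :=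
    tendsto_pow_atTop_nhds_zero_of_lt_one hr0 hr1
  have hlim : Filter.Tendsto (fun n => (C - C * r ^ n) / (A + B * r ^ n))
      Filter.atTop (nhds (C / A)) := by
    have h1 : Filter.Tendsto (fun n => C - C * r ^ n) Filter.atTop (nhds C) := by
      simpa using Filter.Tendsto.sub (tendsto_const_nhds) (Filter.Tendsto.const_mul C hrn)
    have h2 : Filter.Tendsto (fun n => A + B * r ^ n) Filter.atTop (nhds A) := by
      simpa using Filter.Tendsto.add (tendsto_const_nhds) (Filter.Tendsto.const_mul B hrn)
    exact h1.div h2 hAne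
  rw [← hval]
  exact Filter.Tendsto.congr (fun n => (hrat n).symm) hlim
end
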